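/- arXiv:1911.01515 — 2 statements merged into one kernel-verified Lean document; each statement's English description precedes it below -/
import Mathlib

section
/- For every 3-periodic billiard orbit of E with vertices A, B, C and side lengths ℓ_A, ℓ_B, ℓ_C, the Mittenpunkt of the orbit is stationary at the center of the billiard: ℓ_A(ℓ_B + ℓ_C − ℓ_A)·A + ℓ_B(ℓ_C + ℓ_A − ℓ_B)·B + ℓ_C(ℓ_A + ℓ_B − ℓ_C)·C = (0,0), i.e., the triangle center X₉ with barycentric coordinates ℓ_A(ℓ_B + ℓ_C − ℓ_A) : ℓ_B(ℓ_C + ℓ_A − ℓ_B) : ℓ_C(ℓ_A + ℓ_B − ℓ_C) equals the origin. -/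
open scoped RealInnerProductSpace

noncomputable section

abbrev Pt : Type := EuclideanSpace ℝ (Fin 2)

/-- f(x,y) = x²/a² + y²/b² -/
def fE (a b : ℝ) (p : Pt) : ℝ := (p 0) ^ 2 / a ^ 2 + (p 1) ^ 2 / b ^ 2

/-- ∇f(x,y) = (2x/a², 2y/b²) -/
def gradE (a b : ℝ) (p : Pt) : Pt :=
  (WithLp.equiv 2 (Fin 2 → ℝ)).symm ![2 * p 0 / a ^ 2, 2 * p 1 / b ^ 2]

/-- unit vector from `p` to `q` -/
def uvec (p q : Pt) : Pt := ‖q - p‖⁻¹ • (q - p)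

/-- An N-periodic billiard orbit in the ellipse with semiaxes a, b:
vertices on the ellipse, consecutive vertices distinct, and the elastic
reflection law `u_i = u_{i-1} - 2 (u_{i-1}·n_i) n_i` at each bounce. -/
def IsOrbit (a b : ℝ) {N : ℕ} (P : ZMod N → Pt) : Prop :=
  (∀ i, fE a b (P i) = 1) ∧ (∀ i, P (i + 1) ≠ P i) ∧
  ∀ i : ZMod N,
    uvec (P i) (P (i + 1)) =
      uvec (P (i - 1)) (P i) -
        (2 * ⟪uvec (P (i - 1)) (P i), ‖gradE a b (P i)‖⁻¹ • gradE a b (P i)⟫) •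
          (‖gradE a b (P i)‖⁻¹ • gradE a b (P i))

/-- Joachimsthal quantity (1/2)·(u_{i−1} · ∇f(P i)) at bounce i. -/
def joach (a b : ℝ) {N : ℕ} (P : ZMod N → Pt) (i : ZMod N) : ℝ :=
  (1 / 2) * ⟪uvec (P (i - 1)) (P i), gradE a b (P i)⟫

/-- planar cross product (determinant) -/
def cross (u v : Pt) : ℝ := u 0 * v 1 - u 1 * v 0

/-- Convex orbit: for each side, all other vertices lie strictly on one
and the same side of the line through P i and P (i+1). -/
def IsConvexOrbit (a b : ℝ) {N : ℕ} (P : ZMod N → Pt) : Prop :=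
  IsOrbit a b P ∧
  ∀ i : ZMod N,
    (∀ j, j ≠ i → j ≠ i + 1 → 0 < cross (P (i + 1) - P i) (P j - P i)) ∨
    (∀ j, j ≠ i → j ≠ i + 1 → cross (P (i + 1) - P i) (P j - P i) < 0)

/-- side length ℓ_A = ‖B − C‖ -/
def lA (P : ZMod 3 → Pt) : ℝ := ‖P 1 - P 2‖
/-- side length ℓ_B = ‖C − A‖ -/
def lB (P : ZMod 3 → Pt) : ℝ := ‖P 2 - P 0‖
/-- side length ℓ_C = ‖A − B‖ -/
def lC (P : ZMod 3 → Pt) : ℝ := ‖P 0 - P 1‖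
/-- semiperimeter -/
def sper (P : ZMod 3 → Pt) : ℝ := (lA P + lB P + lC P) / 2
/-- area Δ = |det(B − A, C − A)|/2 -/
def areaT (P : ZMod 3 → Pt) : ℝ := |cross (P 1 - P 0) (P 2 - P 0)| / 2
/-- inradius r = Δ/s -/
def inradius (P : ZMod 3 → Pt) : ℝ := areaT P / sper P
/-- circumradius R = ℓ_A ℓ_B ℓ_C/(4Δ) -/
def circumradius (P : ZMod 3 → Pt) : ℝ := lA P * lB P * lC P / (4 * areaT P)
/-- incenter I = (ℓ_A·A + ℓ_B·B + ℓ_C·C)/(2s) -/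
def incenterT (P : ZMod 3 → Pt) : Pt :=
  (2 * sper P)⁻¹ • (lA P • P 0 + lB P • P 1 + lC P • P 2)

/-!
Write `g` for the polar form of `f`, so `∇f(p)·x = 2 g(x, p)`. The reflection law flips the normal
component of the direction at each bounce, while along any chord `pq` of `E` the normal components at
`p` and `q` are opposite; hence Joachimsthal's quantity `J = (1 - g(p, q)) / ‖q - p‖` is the same for
every side, i.e. `g(B, C) = 1 - J ℓ_A`, `g(C, A) = 1 - J ℓ_B`, `g(A, B) = 1 - J ℓ_C`. With these values
of the Gram matrix, the combination `v = Σ ℓ_A(ℓ_B + ℓ_C − ℓ_A)·A` satisfies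
`g(v, B − A) = g(v, C − A) = 0` identically in `J`. Three distinct points of an ellipse are never
collinear, so `B − A` and `C − A` span the plane, and `g` is nondegenerate: `v = 0`.
-/

lemma inner_reflect_eq_neg {E : Type*} [NormedAddCommGroup E] [InnerProductSpace ℝ E] (u g : E) :
    ⟪u - (2 * ⟪u, ‖g‖⁻¹ • g⟫) • (‖g‖⁻¹ • g), g⟫ = -⟪u, g⟫ := by
  by_cases hg : g = 0
  · simp [hg]
  have hg' : ‖g‖ ≠ 0 := norm_ne_zero_iff.mpr hg
  rw [inner_sub_left, real_inner_smul_left, real_inner_smul_left, real_inner_smul_right,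
    real_inner_self_eq_norm_mul_norm]
  field_simp
  ring

lemma pt_inner_eq (u v : Pt) : ⟪u, v⟫ = u 0 * v 0 + u 1 * v 1 := by
  simp only [PiLp.inner_apply, RCLike.inner_apply, Real.ringHom_apply, Fin.sum_univ_two]
  ring

lemma exists_eq_smul_of_cross_eq_zero {d e : Pt} (hd : d ≠ 0) (h : cross d e = 0) :
    ∃ t : ℝ, e = t • d := by
  unfold cross at h
  by_cases h0 : d 0 = 0
  · have h1 : d 1 ≠ 0 := fun h1 => hd (by ext i; fin_cases i <;> simp [h0, h1])
    refine ⟨e 1 / d 1, ?_⟩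
    ext i; fin_cases i <;> simp only [Fin.zero_eta, Fin.mk_one, PiLp.smul_apply, smul_eq_mul] <;>
      field_simp
    linear_combination -h
  · refine ⟨e 0 / d 0, ?_⟩
    ext i; fin_cases i <;> simp only [Fin.zero_eta, Fin.mk_one, PiLp.smul_apply, smul_eq_mul] <;>
      field_simp
    linear_combination h

def bilinE (a b : ℝ) (p q : Pt) : ℝ := p 0 * q 0 / a ^ 2 + p 1 * q 1 / b ^ 2

section Ellipse

variable {a b : ℝ}

lemma bilinE_self (p : Pt) : bilinE a b p p = fE a b p := by
  simp only [bilinE, fE]; ring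

lemma bilinE_comm (p q : Pt) : bilinE a b p q = bilinE a b q p := by
  simp only [bilinE]; ring

lemma bilinE_sub_left (p q r : Pt) : bilinE a b (p - q) r = bilinE a b p r - bilinE a b q r := by
  simp only [bilinE, PiLp.sub_apply]; ring

lemma inner_gradE (x p : Pt) : ⟪x, gradE a b p⟫ = 2 * bilinE a b x p := by
  simp only [pt_inner_eq, bilinE]
  change x 0 * (2 * p 0 / a ^ 2) + x 1 * (2 * p 1 / b ^ 2) = _
  ring

lemma fE_pos (ha : a ≠ 0) (hb : b ≠ 0) {p : Pt} (hp : p ≠ 0) : 0 < fE a b p := by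
  have hcoord : p 0 ≠ 0 ∨ p 1 ≠ 0 := by
    by_contra! h
    exact hp (by ext i; fin_cases i <;> simp [h.1, h.2])
  unfold fE
  rcases hcoord with h | h <;> positivity

lemma cross_sub_ne_zero_of_fE_eq_one (ha : a ≠ 0) (hb : b ≠ 0) {A B C : Pt}
    (hA : fE a b A = 1) (hB : fE a b B = 1) (hC : fE a b C = 1)
    (hAB : A ≠ B) (hBC : B ≠ C) (hCA : C ≠ A) : cross (B - A) (C - A) ≠ 0 := by
  intro h
  obtain ⟨t, ht⟩ := exists_eq_smul_of_cross_eq_zero (sub_ne_zero.mpr hAB.symm) h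
  obtain rfl : C = A + t • (B - A) := by rw [← ht]; abel
  -- the line through `A` and `B` meets the ellipse only at the parameters `t = 0, 1`
  have key : t * (t - 1) * fE a b (B - A) = 0 := by
    simp only [fE, PiLp.add_apply, PiLp.smul_apply, PiLp.sub_apply, smul_eq_mul] at hA hB hC ⊢
    linear_combination hC - t * hB + (t - 1) * hA
  rcases mul_eq_zero.mp key with ht | hQ
  · rcases mul_eq_zero.mp ht with rfl | ht1
    · exact hCA (by simp)
    · obtain rfl : t = 1 := by linarith
      exact hBC (by simp)
  · exact (fE_pos ha hb (sub_ne_zero.mpr hAB.symm)).ne' hQ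

lemma eq_zero_of_bilinE_eq_zero (ha : a ≠ 0) (hb : b ≠ 0) {v d e : Pt} (hde : cross d e ≠ 0)
    (hd : bilinE a b v d = 0) (he : bilinE a b v e = 0) : v = 0 := by
  unfold bilinE at hd he
  unfold cross at hde
  have h0 : (d 0 * e 1 - d 1 * e 0) * (v 0 / a ^ 2) = 0 := by
    linear_combination e 1 * hd - d 1 * he
  have h1 : (d 0 * e 1 - d 1 * e 0) * (v 1 / b ^ 2) = 0 := by
    linear_combination d 0 * he - e 0 * hd
  ext i
  fin_cases i
  · simpa [hde, ha] using h0
  · simpa [hde, hb] using h1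

end Ellipse

def mittenpunktSum (A B C : Pt) (la lb lc : ℝ) : Pt :=
  (la * (lb + lc - la)) • A + (lb * (lc + la - lb)) • B + (lc * (la + lb - lc)) • C

section Gram

variable {a b J la lb lc : ℝ} {A B C : Pt}

lemma bilinE_mittenpunktSum_sub_eq_zero
    (hA : fE a b A = 1) (hB : fE a b B = 1) (hC : fE a b C = 1)
    (hBC : bilinE a b B C = 1 - J * la) (hCA : bilinE a b C A = 1 - J * lb)
    (hAB : bilinE a b A B = 1 - J * lc) :
    bilinE a b (mittenpunktSum A B C la lb lc) (B - A) = 0 ∧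
      bilinE a b (mittenpunktSum A B C la lb lc) (C - A) = 0 := by
  simp only [mittenpunktSum, bilinE, fE, PiLp.add_apply, PiLp.smul_apply, PiLp.sub_apply,
    smul_eq_mul] at hA hB hC hBC hCA hAB ⊢
  constructor
  · linear_combination (la * (lb + lc - la)) * (hAB - hA) + (lb * (lc + la - lb)) * (hB - hAB) +
      (lc * (la + lb - lc)) * (hBC - hCA)
  · linear_combination (la * (lb + lc - la)) * (hCA - hA) + (lb * (lc + la - lb)) * (hBC - hAB) +
      (lc * (la + lb - lc)) * (hC - hCA)

theorem mittenpunktSum_eq_zero (ha : a ≠ 0) (hb : b ≠ 0)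
    (hA : fE a b A = 1) (hB : fE a b B = 1) (hC : fE a b C = 1)
    (hBC : bilinE a b B C = 1 - J * la) (hCA : bilinE a b C A = 1 - J * lb)
    (hAB : bilinE a b A B = 1 - J * lc) (hAB' : A ≠ B) (hBC' : B ≠ C) (hCA' : C ≠ A) :
    mittenpunktSum A B C la lb lc = 0 :=
  have h := bilinE_mittenpunktSum_sub_eq_zero hA hB hC hBC hCA hAB
  eq_zero_of_bilinE_eq_zero ha hb (cross_sub_ne_zero_of_fE_eq_one ha hb hA hB hC hAB' hBC' hCA')
    h.1 h.2

end Gram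

section Joachimsthal

variable {a b : ℝ} {N : ℕ} {P : ZMod N → Pt}

lemma inner_uvec_gradE_add_eq_zero {p q : Pt} (h : fE a b p = fE a b q) :
    ⟪uvec p q, gradE a b p⟫ + ⟪uvec p q, gradE a b q⟫ = 0 := by
  rw [uvec, real_inner_smul_left, real_inner_smul_left, inner_gradE, inner_gradE,
    bilinE_sub_left, bilinE_sub_left, bilinE_self, bilinE_self, bilinE_comm q p, h]
  ring

theorem IsOrbit.joach_add_one (hP : IsOrbit a b P) (i : ZMod N) :
    joach a b P (i + 1) = joach a b P i := by
  have hrefl := congrArg (⟪·, gradE a b (P i)⟫) (hP.2.2 i)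
  simp only [inner_reflect_eq_neg] at hrefl
  have hchord := inner_uvec_gradE_add_eq_zero ((hP.1 i).trans (hP.1 (i + 1)).symm)
  rw [joach, joach, add_sub_cancel_right]
  linarith

theorem IsOrbit.joach_eq_joach_zero (hP : IsOrbit a b P) (i : ZMod N) :
    joach a b P i = joach a b P 0 := by
  obtain ⟨k, rfl⟩ := ZMod.intCast_surjective i
  induction k using Int.induction_on with
  | zero => simp
  | succ k ih => rw [← ih, Int.cast_add, Int.cast_one, hP.joach_add_one]
  | pred k ih =>
    rw [← ih, ← hP.joach_add_one]
    push_cast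
    ring_nf

theorem IsOrbit.bilinE_eq (hP : IsOrbit a b P) (i : ZMod N) :
    bilinE a b (P i) (P (i + 1)) = 1 - joach a b P 0 * ‖P (i + 1) - P i‖ := by
  have hne : ‖P (i + 1) - P i‖ ≠ 0 := norm_ne_zero_iff.mpr (sub_ne_zero.mpr (hP.2.1 i))
  rw [← hP.joach_eq_joach_zero (i + 1), joach, add_sub_cancel_right, uvec, real_inner_smul_left,
    inner_gradE, bilinE_sub_left, bilinE_self, hP.1]
  field_simp
  ring

end Joachimsthal

/-- the Mittenpunkt X₉ of every 3-periodic orbit is stationary at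
the billiard's center (the origin). -/
theorem mittenpunkt_stationary (a b : ℝ) (hb : 0 < b) (hab : b ≤ a)
    (P : ZMod 3 → Pt) (hP : IsOrbit a b P) :
    (lA P * (lB P + lC P - lA P)) • P 0 + (lB P * (lC P + lA P - lB P)) • P 1 +
      (lC P * (lA P + lB P - lC P)) • P 2 = (0 : Pt) := by
  have hAB := hP.bilinE_eq 0
  have hBC := hP.bilinE_eq 1
  have hCA := hP.bilinE_eq 2
  simp only [show (0 + 1 : ZMod 3) = 1 from rfl, show (1 + 1 : ZMod 3) = 2 from rfl,
    show (2 + 1 : ZMod 3) = 0 from rfl] at hAB hBC hCA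
  rw [norm_sub_rev] at hAB hBC hCA
  exact mittenpunktSum_eq_zero (hb.trans_le hab).ne' hb.ne' (hP.1 0) (hP.1 1) (hP.1 2) hBC hCA hAB
    (hP.2.1 0).symm (hP.2.1 1).symm (hP.2.1 2).symm
end
end

section
/- For every convex N-periodic billiard orbit P of the ellipse E (N ≥ 3), with Joachimsthal constant γ, the perimeter L = ∑_i ‖P(i+1) − P(i)‖ satisfies L = 8γ · ∑_{i ∈ ZMod N} 1/‖∇f(P i)‖². -/
open scoped RealInnerProductSpace

noncomputable section

/-!
Writing `uᵢ` for the unit vector along the side `Pᵢ Pᵢ₊₁`, each side length is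
`⟪uᵢ, Pᵢ₊₁ - Pᵢ⟫`, so summation by parts over the cycle turns the perimeter into
`∑ ⟪uᵢ₋₁ - uᵢ, Pᵢ⟫`. The reflection law makes `uᵢ₋₁ - uᵢ` the multiple
`2 ⟪uᵢ₋₁, ∇f⟫ ∇f / ‖∇f‖²` of the gradient at `Pᵢ`, and Euler's identity
`⟪∇f(p), p⟫ = 2 f(p) = 2` on the ellipse gives `⟪uᵢ₋₁ - uᵢ, Pᵢ⟫ = 8γ / ‖∇f(Pᵢ)‖²`.
-/

lemma inner_uvec_sub (p q : Pt) : ⟪uvec p q, q - p⟫ = ‖q - p‖ := by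
  rcases eq_or_ne (q - p) 0 with h | h
  · simp [h]
  · rw [uvec, real_inner_smul_left, real_inner_self_eq_norm_sq]
    field_simp [norm_ne_zero_iff.mpr h]

lemma cyclic_sum_by_parts {E G : Type*} [NormedAddCommGroup E] [InnerProductSpace ℝ E]
    [AddCommGroup G] [Fintype G] (g : G) (u p : G → E) :
    ∑ i, ⟪u i, p (i + g) - p i⟫ = ∑ i, ⟪u (i - g) - u i, p i⟫ := by
  have hshift : ∑ i, ⟪u i, p (i + g)⟫ = ∑ i, ⟪u (i - g), p i⟫ :=
    Fintype.sum_equiv (Equiv.addRight g) _ _ fun i => by simp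
  simp only [inner_sub_left, inner_sub_right, Finset.sum_sub_distrib, hshift]

lemma inner_reflection_sub {E : Type*} [NormedAddCommGroup E] [InnerProductSpace ℝ E]
    (u g x : E) :
    ⟪(2 * ⟪u, ‖g‖⁻¹ • g⟫) • (‖g‖⁻¹ • g), x⟫ = 2 * ⟪u, g⟫ * ⟪g, x⟫ / ‖g‖ ^ 2 := by
  simp only [real_inner_smul_left, real_inner_smul_right]
  ring

lemma inner_gradE_self (a b : ℝ) (p : Pt) : ⟪gradE a b p, p⟫ = 2 * fE a b p := by
  simp only [gradE, fE, WithLp.equiv_symm_apply, PiLp.inner_apply, RCLike.inner_apply,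
    Real.ringHom_apply, Fin.sum_univ_two, Matrix.cons_val_zero, Matrix.cons_val_one]
  ring

lemma IsOrbit.inner_uvec_sub_uvec {a b : ℝ} {N : ℕ} {P : ZMod N → Pt} (hP : IsOrbit a b P)
    (i : ZMod N) :
    ⟪uvec (P (i - 1)) (P i) - uvec (P i) (P (i + 1)), P i⟫ =
      8 * joach a b P i / ‖gradE a b (P i)‖ ^ 2 := by
  rw [hP.2.2 i, sub_sub_cancel, inner_reflection_sub, inner_gradE_self, hP.1 i, joach]
  ring

theorem perimeter_formula_general (a b : ℝ)
    (N : ℕ) [NeZero N] (P : ZMod N → Pt) (hP : IsConvexOrbit a b P)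
    (γ : ℝ) (hγ : ∀ i : ZMod N, joach a b P i = γ) :
    (∑ i : ZMod N, ‖P (i + 1) - P i‖) =
      8 * γ * ∑ i : ZMod N, 1 / ‖gradE a b (P i)‖ ^ 2 := by
  calc (∑ i : ZMod N, ‖P (i + 1) - P i‖)
      = ∑ i : ZMod N, ⟪uvec (P i) (P (i + 1)), P (i + 1) - P i⟫ := by
        simp only [inner_uvec_sub]
    _ = ∑ i : ZMod N, ⟪uvec (P (i - 1)) (P i) - uvec (P i) (P (i + 1)), P i⟫ := by
        rw [cyclic_sum_by_parts 1 (fun i => uvec (P i) (P (i + 1))) P]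
        simp only [sub_add_cancel]
    _ = 8 * γ * ∑ i : ZMod N, 1 / ‖gradE a b (P i)‖ ^ 2 := by
        simp only [hP.1.inner_uvec_sub_uvec, hγ, Finset.mul_sum, mul_one_div]

/-- L = 8γ·∑ᵢ 1/‖∇f(P i)‖² for a convex N-periodic orbit. -/
theorem perimeter_formula (a b : ℝ) (hb : 0 < b) (hab : b ≤ a)
    (N : ℕ) [NeZero N] (hN : 3 ≤ N) (P : ZMod N → Pt) (hP : IsConvexOrbit a b P)
    (γ : ℝ) (hγ : ∀ i : ZMod N, joach a b P i = γ) :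
    (∑ i : ZMod N, ‖P (i + 1) - P i‖) =
      8 * γ * ∑ i : ZMod N, 1 / ‖gradE a b (P i)‖ ^ 2 :=
  perimeter_formula_general a b N P hP γ hγ
end
end
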